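/- arXiv:1710.08240 — 4 statements merged into one kernel-verified Lean document; each statement's English description precedes it below -/
import Mathlib

section
/- Let γ > 0 and let μ be a Borel probability measure on ℝ supported in the interval [0, γ]. Let t > 0 satisfy t² ≥ (3√10/2)·γ. Then the function ℓ_{μ,t}(x) = ∫_ℝ h_t(x-y) dμ(y) is monotone nondecreasing on (-∞, t²/3], monotone nonincreasing on [t²/3 + γ, ∞), and concave on the interval [t²/3, t²/3 + γ]. -/
/-! On `(0, ∞)` the kernel satisfies `h_t' = h_t · (t² - 3u)/(2u²)` and
`h_t'' = h_t · (15u² - 10t²u + t⁴)/(4u⁴)`, and it vanishes on `(-∞, 0]`. Hence `h_t` increases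
up to its maximum at `t²/3`, decreases afterwards, and is concave between its inflection points
`t²/3 ± t²√10/15`. Translating by `y ∈ [0, γ]` and averaging over `μ` preserves monotonicity on
`(-∞, t²/3]` and on `[t²/3 + γ, ∞)`; the hypothesis on `t` says exactly that `γ ≤ t²√10/15`, so
the translates of `[t²/3, t²/3 + γ]` stay between the inflection points and concavity survives
as well. -/

open MeasureTheory Real Set Filter Topology

/-- The density kernel of the Lévy distribution (one-sided `1/2`-stable law) of parameter `t`,
up to the constant factor `t/√(2π)`: `u ↦ u^{-3/2} exp(-t²/(2u))` for `u > 0`, and `0` otherwise. -/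
noncomputable def levyKernel (t u : ℝ) : ℝ :=
  if 0 < u then u ^ (-(3 : ℝ) / 2) * Real.exp (-t ^ 2 / (2 * u)) else 0

section LevyKernel

variable {t u : ℝ}

lemma levyKernel_of_pos (hu : 0 < u) :
    levyKernel t u = u ^ (-(3 : ℝ) / 2) * exp (-t ^ 2 / (2 * u)) := if_pos hu

lemma levyKernel_of_nonpos (hu : u ≤ 0) : levyKernel t u = 0 := if_neg hu.not_gt

lemma levyKernel_pos (hu : 0 < u) : 0 < levyKernel t u := by
  rw [levyKernel_of_pos hu]; positivity

lemma levyKernel_nonneg (t u : ℝ) : 0 ≤ levyKernel t u := by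
  rcases lt_or_ge 0 u with hu | hu
  · exact (levyKernel_pos hu).le
  · exact (levyKernel_of_nonpos hu).ge

lemma measurable_levyKernel (t : ℝ) : Measurable (levyKernel t) :=
  Measurable.ite measurableSet_Ioi (by fun_prop) measurable_const

lemma hasDerivAt_levyKernel (t : ℝ) (hu : 0 < u) :
    HasDerivAt (levyKernel t) (levyKernel t u * ((t ^ 2 - 3 * u) / (2 * u ^ 2))) u := by
  have hpow := Real.hasDerivAt_rpow_const (p := -(3 : ℝ) / 2) (Or.inl hu.ne')
  have hexp := ((hasDerivAt_const u (-t ^ 2)).div ((hasDerivAt_id u).const_mul 2)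
    (by positivity)).exp
  have hloc : levyKernel t =ᶠ[𝓝 u] fun v => v ^ (-(3 : ℝ) / 2) * exp (-t ^ 2 / (2 * v)) :=
    (eventually_gt_nhds hu).mono fun v hv => levyKernel_of_pos hv
  refine ((hpow.mul hexp).congr_of_eventuallyEq hloc).congr_deriv ?_
  simp only [Pi.div_apply, id]
  rw [levyKernel_of_pos hu, Real.rpow_sub_one hu.ne']
  field_simp
  ring

lemma hasDerivAt_levyKernel_deriv (t : ℝ) (hu : 0 < u) :
    HasDerivAt (fun v => levyKernel t v * ((t ^ 2 - 3 * v) / (2 * v ^ 2)))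
      (levyKernel t u * ((15 * u ^ 2 - 10 * t ^ 2 * u + t ^ 4) / (4 * u ^ 4))) u := by
  have hq : HasDerivAt (fun v => (t ^ 2 - 3 * v) / (2 * v ^ 2))
      ((3 * u - 2 * t ^ 2) / (2 * u ^ 3)) u :=
    ((((hasDerivAt_id u).const_mul 3).const_sub (t ^ 2)).div
      ((hasDerivAt_pow 2 u).const_mul 2) (by positivity)).congr_deriv
      (by simp only [id]; field_simp; ring)
  refine ((hasDerivAt_levyKernel t hu).mul hq).congr_deriv ?_
  field_simp
  ring

lemma monotoneOn_levyKernel (t : ℝ) : MonotoneOn (levyKernel t) (Iic (t ^ 2 / 3)) := by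
  have hpos : MonotoneOn (levyKernel t) (Ioc 0 (t ^ 2 / 3)) :=
    monotoneOn_of_hasDerivWithinAt_nonneg (convex_Ioc _ _)
      (fun u hu => (hasDerivAt_levyKernel t hu.1).continuousAt.continuousWithinAt)
      (fun u hu => (hasDerivAt_levyKernel t (interior_subset hu).1).hasDerivWithinAt)
      fun u hu => by
        rw [interior_Ioc] at hu
        exact mul_nonneg (levyKernel_nonneg t u) (div_nonneg (by linarith [hu.2]) (by positivity))
  intro u hu v hv huv
  rcases lt_or_ge 0 u with hu0 | hu0
  · exact hpos ⟨hu0, hu⟩ ⟨hu0.trans_le huv, hv⟩ huv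
  · rw [levyKernel_of_nonpos hu0]
    exact levyKernel_nonneg t v

lemma antitoneOn_levyKernel (ht : t ≠ 0) : AntitoneOn (levyKernel t) (Ici (t ^ 2 / 3)) := by
  have h3 : 0 < t ^ 2 / 3 := by positivity
  refine antitoneOn_of_hasDerivWithinAt_nonpos (convex_Ici _)
    (fun u hu => (hasDerivAt_levyKernel t (h3.trans_le hu)).continuousAt.continuousWithinAt)
    (fun u hu => (hasDerivAt_levyKernel t (h3.trans_le (interior_subset hu))).hasDerivWithinAt)
    fun u hu => ?_
  rw [interior_Ici] at hu
  exact mul_nonpos_of_nonneg_of_nonpos (levyKernel_nonneg t u)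
    (div_nonpos_of_nonpos_of_nonneg (by linarith [mem_Ioi.1 hu]) (by positivity))

lemma levyKernel_le (ht : t ≠ 0) (u : ℝ) : levyKernel t u ≤ levyKernel t (t ^ 2 / 3) := by
  rcases le_total u (t ^ 2 / 3) with h | h
  · exact monotoneOn_levyKernel t h self_mem_Iic h
  · exact antitoneOn_levyKernel ht self_mem_Ici h h

lemma concaveOn_levyKernel (ht : t ≠ 0) :
    ConcaveOn ℝ (Icc (t ^ 2 / 3 - t ^ 2 * √10 / 15) (t ^ 2 / 3 + t ^ 2 * √10 / 15))
      (levyKernel t) := by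
  have hsq : √10 ^ 2 = 10 := Real.sq_sqrt (by norm_num)
  have hlt : √10 < 5 := by nlinarith [Real.sqrt_nonneg 10]
  have hpos : 0 < t ^ 2 / 3 - t ^ 2 * √10 / 15 := by nlinarith [sq_pos_of_ne_zero ht]
  refine concaveOn_of_hasDerivWithinAt2_nonpos (convex_Icc _ _)
    (fun u hu => (hasDerivAt_levyKernel t (hpos.trans_le hu.1)).continuousAt.continuousWithinAt)
    (fun u hu => (hasDerivAt_levyKernel t
      (hpos.trans_le (interior_subset hu).1)).hasDerivWithinAt)
    (fun u hu => (hasDerivAt_levyKernel_deriv t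
      (hpos.trans_le (interior_subset hu).1)).hasDerivWithinAt)
    fun u hu => ?_
  rw [interior_Icc] at hu
  have hroots : 15 * u ^ 2 - 10 * t ^ 2 * u + t ^ 4 =
      15 * (u - (t ^ 2 / 3 - t ^ 2 * √10 / 15)) * (u - (t ^ 2 / 3 + t ^ 2 * √10 / 15)) := by
    linear_combination t ^ 4 / 15 * hsq
  exact mul_nonpos_of_nonneg_of_nonpos (levyKernel_nonneg t u)
    (div_nonpos_of_nonpos_of_nonneg (by rw [hroots]; nlinarith [hu.1, hu.2]) (by positivity))

lemma integrable_levyKernel_comp_sub (ht : t ≠ 0) (μ : Measure ℝ) [IsFiniteMeasure μ]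
    (x : ℝ) : Integrable (fun y => levyKernel t (x - y)) μ :=
  .of_bound
    ((measurable_levyKernel t).comp (measurable_const.sub measurable_id)).aestronglyMeasurable
    (levyKernel t (t ^ 2 / 3)) <| ae_of_all _ fun y => by
      rw [Real.norm_of_nonneg (levyKernel_nonneg t _)]
      exact levyKernel_le ht _

end LevyKernel

theorem concaveOn_integral {E α : Type*} [AddCommMonoid E] [Module ℝ E] [MeasurableSpace α]
    {μ : Measure α} {s : Set E} {g : E → α → ℝ} (hs : Convex ℝ s)
    (hg : ∀ᵐ y ∂μ, ConcaveOn ℝ s (g · y)) (hint : ∀ x ∈ s, Integrable (g x) μ) :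
    ConcaveOn ℝ s (fun x => ∫ y, g x y ∂μ) := by
  refine ⟨hs, fun x hx z hz a b ha hb hab => ?_⟩
  calc a • ∫ y, g x y ∂μ + b • ∫ y, g z y ∂μ
        = ∫ y, a • g x y + b • g z y ∂μ := by
        rw [← integral_smul, ← integral_smul]
        exact (integral_add ((hint x hx).smul a) ((hint z hz).smul b)).symm
    _ ≤ ∫ y, g (a • x + b • z) y ∂μ :=
        integral_mono_ae (((hint x hx).smul a).add ((hint z hz).smul b))
          (hint _ (hs hx hz ha hb hab)) (hg.mono fun y hy => hy.2 hx hz ha hb hab)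

section Convolution

variable {μ : Measure ℝ} {f : ℝ → ℝ} {a b γ : ℝ}

theorem monotoneOn_integral_comp_sub (hf : MonotoneOn f (Iic a)) (hμ : ∀ᵐ y ∂μ, 0 ≤ y)
    (hint : ∀ x, Integrable (fun y => f (x - y)) μ) :
    MonotoneOn (fun x => ∫ y, f (x - y) ∂μ) (Iic a) := fun x hx z hz hxz =>
  integral_mono_ae (hint x) (hint z) <| hμ.mono fun y hy =>
    hf (mem_Iic.2 (by linarith [mem_Iic.1 hx])) (mem_Iic.2 (by linarith [mem_Iic.1 hz]))
      (by linarith)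

theorem antitoneOn_integral_comp_sub (hf : AntitoneOn f (Ici a)) (hμ : ∀ᵐ y ∂μ, y ≤ γ)
    (hint : ∀ x, Integrable (fun y => f (x - y)) μ) :
    AntitoneOn (fun x => ∫ y, f (x - y) ∂μ) (Ici (a + γ)) := fun x hx z hz hxz =>
  integral_mono_ae (hint z) (hint x) <| hμ.mono fun y hy =>
    hf (mem_Ici.2 (by linarith [mem_Ici.1 hx])) (mem_Ici.2 (by linarith [mem_Ici.1 hz]))
      (by linarith)

theorem concaveOn_integral_comp_sub (hf : ConcaveOn ℝ (Icc (a - γ) b) f)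
    (hμ : ∀ᵐ y ∂μ, y ∈ Icc 0 γ) (hint : ∀ x, Integrable (fun y => f (x - y)) μ) :
    ConcaveOn ℝ (Icc a b) (fun x => ∫ y, f (x - y) ∂μ) := by
  refine concaveOn_integral (convex_Icc a b) (hμ.mono fun y hy => ?_) fun x _ => hint x
  have hshift := hf.translate_right (-y)
  refine (hshift.subset (fun x hx => ?_) (convex_Icc a b)).congr fun x _ => ?_
  · simp only [mem_preimage, mem_Icc] at hx hy ⊢
    constructor <;> linarith
  · simp only [Function.comp_apply, neg_add_eq_sub]

end Convolution

theorem levy_convolution_monotonicity_concavity_general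
    (γ : ℝ) (μ : Measure ℝ) [IsProbabilityMeasure μ]
    (hsupp : μ (Set.Icc 0 γ)ᶜ = 0)
    (t : ℝ) (ht0 : 0 < t) (ht : 3 * Real.sqrt 10 / 2 * γ ≤ t ^ 2) :
    MonotoneOn (fun x => ∫ y, levyKernel t (x - y) ∂μ) (Set.Iic (t ^ 2 / 3)) ∧
    AntitoneOn (fun x => ∫ y, levyKernel t (x - y) ∂μ) (Set.Ici (t ^ 2 / 3 + γ)) ∧
    ConcaveOn ℝ (Set.Icc (t ^ 2 / 3) (t ^ 2 / 3 + γ))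
      (fun x => ∫ y, levyKernel t (x - y) ∂μ) := by
  have hμ : ∀ᵐ y ∂μ, y ∈ Icc 0 γ := ae_iff.2 hsupp
  have hint := integrable_levyKernel_comp_sub ht0.ne' μ
  have hγ : γ ≤ t ^ 2 * √10 / 15 := by
    have h := mul_le_mul_of_nonneg_left ht (Real.sqrt_nonneg 10)
    rw [show √10 * (3 * √10 / 2 * γ) = 3 / 2 * √10 ^ 2 * γ by ring,
      Real.sq_sqrt (by norm_num)] at h
    linarith
  refine ⟨monotoneOn_integral_comp_sub (monotoneOn_levyKernel t) (hμ.mono fun _ h => h.1) hint,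
    antitoneOn_integral_comp_sub (antitoneOn_levyKernel ht0.ne') (hμ.mono fun _ h => h.2) hint,
    concaveOn_integral_comp_sub ?_ hμ hint⟩
  exact (concaveOn_levyKernel ht0.ne').subset (Icc_subset_Icc (by linarith) (by linarith))
    (convex_Icc _ _)

theorem levy_convolution_monotonicity_concavity
    (γ : ℝ) (hγ : 0 < γ) (μ : Measure ℝ) [IsProbabilityMeasure μ]
    (hsupp : μ (Set.Icc 0 γ)ᶜ = 0)
    (t : ℝ) (ht0 : 0 < t) (ht : 3 * Real.sqrt 10 / 2 * γ ≤ t ^ 2) :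
    MonotoneOn (fun x => ∫ y, levyKernel t (x - y) ∂μ) (Set.Iic (t ^ 2 / 3)) ∧
    AntitoneOn (fun x => ∫ y, levyKernel t (x - y) ∂μ) (Set.Ici (t ^ 2 / 3 + γ)) ∧
    ConcaveOn ℝ (Set.Icc (t ^ 2 / 3) (t ^ 2 / 3 + γ))
      (fun x => ∫ y, levyKernel t (x - y) ∂μ) :=
  levy_convolution_monotonicity_concavity_general γ μ hsupp t ht0 ht
end

section
/- Let p : ℝ → ℝ be a continuous nonnegative function that is integrable with ∫_ℝ p(x) dx = 1, and suppose p is real analytic at every point of the open set {x ∈ ℝ : p(x) > 0}. Then p is unimodal if and only if for every c > 0 the level set {x ∈ ℝ : p(x) = c} contains at most two points (i.e., for all x₁, x₂, x₃ with p(x₁) = p(x₂) = p(x₃) = c, at least two of x₁, x₂, x₃ are equal). -/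
open MeasureTheory Real Set Filter Topology

/-- A function `f : ℝ → ℝ` is unimodal if there is a mode `a` such that `f` is
nondecreasing on `(-∞, a]` and nonincreasing on `[a, ∞)`. -/
def Unimodal (f : ℝ → ℝ) : Prop :=
  ∃ a : ℝ, MonotoneOn f (Set.Iic a) ∧ AntitoneOn f (Set.Ici a)

/-! A quasiconcave function (all superlevel sets are intervals) that attains its maximum is
unimodal. If a superlevel set of `p` is not an interval, there is a dip `p y < c < min (p x) (p z)`
at `x < y < z` with `c > 0`; the intermediate value theorem solves `p = c` in `(x, y)` and in
`(y, z)`, and once more left of `x`, because integrability forces `p < c` somewhere there.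
Integrability likewise makes a quasiconcave `p` drop below each of its positive values on both
sides, so the maximum is attained. Conversely, two points of a positive level `c` on the same side
of the mode bound a plateau `p = c`; by the identity theorem `p` would then equal `c` everywhere,
which is not integrable. -/

theorem eq_const_of_eventuallyEq_const {𝕜 E : Type*} [NontriviallyNormedField 𝕜]
    [PreconnectedSpace 𝕜] [NormedAddCommGroup E] [NormedSpace 𝕜 E] {f : 𝕜 → E} {c : E} {z₀ : 𝕜}
    (hf : Continuous f) (han : ∀ z, f z = c → AnalyticAt 𝕜 f z)
    (h : f =ᶠ[𝓝 z₀] fun _ => c) : f = fun _ => c := by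
  set U := {z | f =ᶠ[𝓝 z] fun _ => c}
  have hclosed : IsClosed U := by
    refine isClosed_iff_frequently.2 fun z hz => ?_
    by_cases hzU : z ∈ U
    · exact hzU
    have hfreq : ∃ᶠ y in 𝓝 z, f y = c := hz.mono fun y hy => hy.self_of_nhds
    have hfz : f z = c := isClosed_iff_frequently.1 (isClosed_eq hf continuous_const) z hfreq
    refine ((han z hfz).frequently_eq_iff_eventually_eq analyticAt_const).1 ?_
    exact frequently_nhdsWithin_iff.2 <| hz.mono fun y hy =>
      ⟨hy.self_of_nhds, fun hyz => hzU (hyz ▸ hy)⟩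
  have hU : U = univ := IsClopen.eq_univ ⟨hclosed, isOpen_setOfPred_eventually_nhds⟩ ⟨z₀, h⟩
  funext z
  exact (eq_univ_iff_forall.1 hU z).self_of_nhds

theorem MeasureTheory.Integrable.not_eqOn_const_Icc {E : Type*} [NormedAddCommGroup E]
    [NormedSpace ℝ E] {f : ℝ → E} (hf : Continuous f) (hint : Integrable f) {c : E} (hc : c ≠ 0)
    (han : ∀ x, f x = c → AnalyticAt ℝ f x) {u v : ℝ} (huv : u < v) :
    ¬ EqOn f (fun _ => c) (Icc u v) := by
  intro hplateau
  have hmid : f =ᶠ[𝓝 ((u + v) / 2)] fun _ => c :=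
    eventually_of_mem (Icc_mem_nhds (by linarith) (by linarith)) hplateau
  rw [eq_const_of_eventuallyEq_const hf han hmid, integrable_const_iff] at hint
  exact hint.elim hc fun h => h.measure_univ_lt_top.ne Real.volume_univ

theorem MeasureTheory.Integrable.exists_mem_lt_of_measure_eq_top {α : Type*} [MeasurableSpace α]
    {μ : Measure α} {f : α → ℝ} (hf : Integrable f μ) {c : ℝ} (hc : 0 < c) {s : Set α}
    (hs : μ s = ⊤) : ∃ x ∈ s, f x < c := by
  by_contra! h
  exact (hf.measure_ge_lt_top hc).ne (top_unique (hs ▸ measure_mono h))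

theorem MonotoneOn.subsingleton_inter_preimage_of_not_eqOn {α β : Type*} [LinearOrder α]
    [PartialOrder β] {f : α → β} {s : Set α} {c : β} (hf : MonotoneOn f s) (hs : s.OrdConnected)
    (hplateau : ∀ u v, u < v → ¬ EqOn f (fun _ => c) (Icc u v)) :
    (s ∩ f ⁻¹' {c}).Subsingleton := by
  intro x ⟨hxs, hx⟩ y ⟨hys, hy⟩
  wlog hxy : x ≤ y generalizing x y
  · exact (this hys hy hxs hx (le_of_not_ge hxy)).symm
  by_contra hne
  refine hplateau x y (hxy.lt_of_ne hne) fun z hz => le_antisymm ?_ ?_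
  · exact hy ▸ hf (hs.out hxs hys hz) hys hz.2
  · exact hx ▸ hf hxs (hs.out hxs hys hz) hz.1

theorem AntitoneOn.subsingleton_inter_preimage_of_not_eqOn {α β : Type*} [LinearOrder α]
    [PartialOrder β] {f : α → β} {s : Set α} {c : β} (hf : AntitoneOn f s) (hs : s.OrdConnected)
    (hplateau : ∀ u v, u < v → ¬ EqOn f (fun _ => c) (Icc u v)) :
    (s ∩ f ⁻¹' {c}).Subsingleton :=
  hf.dual_right.subsingleton_inter_preimage_of_not_eqOn (c := OrderDual.toDual c) hs hplateau

theorem Set.Subsingleton.eq_or_eq_or_eq_of_mem_union {α : Type*} {s t : Set α}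
    (hs : s.Subsingleton) (ht : t.Subsingleton) {x y z : α} (hx : x ∈ s ∪ t) (hy : y ∈ s ∪ t)
    (hz : z ∈ s ∪ t) : x = y ∨ x = z ∨ y = z := by
  grind [Set.Subsingleton]

theorem QuasiconcaveOn.min_le_of_mem_Icc {𝕜 β : Type*} [Field 𝕜] [LinearOrder 𝕜]
    [IsStrictOrderedRing 𝕜] [LinearOrder β] {f : 𝕜 → β} (hf : QuasiconcaveOn 𝕜 univ f)
    {x y z : 𝕜} (hy : y ∈ Icc x z) : min (f x) (f z) ≤ f y :=
  ((convex_iff_ordConnected.1 (hf (min (f x) (f z)))).out ⟨trivial, min_le_left _ _⟩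
    ⟨trivial, min_le_right _ _⟩ hy).2

theorem quasiconcaveOn_univ_of_level_sets {f : ℝ → ℝ} (hf : Continuous f) (hnn : ∀ x, 0 ≤ f x)
    (hint : Integrable f)
    (hlevel : ∀ c : ℝ, 0 < c → ∀ x₁ x₂ x₃ : ℝ,
      f x₁ = c → f x₂ = c → f x₃ = c → x₁ = x₂ ∨ x₁ = x₃ ∨ x₂ = x₃) :
    QuasiconcaveOn ℝ univ f := by
  refine convex_univ.quasiconcaveOn_of_convex_ge fun r =>
    convex_iff_ordConnected.2 ⟨fun x (hx : r ≤ f x) z (hz : r ≤ f z) y hy => ?_⟩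
  change r ≤ f y
  by_contra! hyr
  obtain ⟨c, hyc, hcr⟩ := exists_between hyr
  have hc : 0 < c := (hnn y).trans_lt hyc
  obtain ⟨w, hw, hwc⟩ := hint.exists_mem_lt_of_measure_eq_top hc (s := Iio x) (by simp)
  obtain ⟨t₀, ht₀, h₀⟩ :=
    intermediate_value_Ioo (le_of_lt hw) hf.continuousOn ⟨hwc, hcr.trans_le hx⟩
  obtain ⟨t₁, ht₁, h₁⟩ :=
    intermediate_value_Ioo' hy.1 hf.continuousOn ⟨hyc, hcr.trans_le hx⟩
  obtain ⟨t₂, ht₂, h₂⟩ :=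
    intermediate_value_Ioo hy.2 hf.continuousOn ⟨hyc, hcr.trans_le hz⟩
  rcases hlevel c hc t₀ t₁ t₂ h₀ h₁ h₂ with h | h | h <;>
    linarith [ht₀.2, ht₁.1, ht₁.2, ht₂.1]

theorem QuasiconcaveOn.exists_forall_le {f : ℝ → ℝ} (hq : QuasiconcaveOn ℝ univ f)
    (hf : Continuous f) {w₁ x₀ w₂ : ℝ} (h₁ : w₁ ≤ x₀) (h₂ : x₀ ≤ w₂) (hf₁ : f w₁ < f x₀)
    (hf₂ : f w₂ < f x₀) : ∃ a, ∀ x, f x ≤ f a := by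
  obtain ⟨a, ha, hmax⟩ :=
    isCompact_Icc.exists_isMaxOn (nonempty_Icc.2 (h₁.trans h₂)) hf.continuousOn
  have hx₀ : f x₀ ≤ f a := hmax ⟨h₁, h₂⟩
  refine ⟨a, fun x => ?_⟩
  rcases lt_or_ge x w₁ with hx | hx
  · have hmin := hq.min_le_of_mem_Icc (y := w₁) ⟨hx.le, ha.1⟩
    exact ((min_le_iff.1 hmin).resolve_right (by linarith)).trans (hmax ⟨le_rfl, h₁.trans h₂⟩)
  rcases le_or_gt x w₂ with hx' | hx'
  · exact hmax ⟨hx, hx'⟩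
  · have hmin := hq.min_le_of_mem_Icc (y := w₂) ⟨ha.2, hx'.le⟩
    exact ((min_le_iff.1 hmin).resolve_left (by linarith)).trans (hmax ⟨h₁.trans h₂, le_rfl⟩)

theorem QuasiconcaveOn.exists_forall_le_of_integrable {f : ℝ → ℝ} (hq : QuasiconcaveOn ℝ univ f)
    (hf : Continuous f) (hnn : ∀ x, 0 ≤ f x) (hint : Integrable f) : ∃ a, ∀ x, f x ≤ f a := by
  by_cases hpos : ∃ x₀, 0 < f x₀
  · obtain ⟨x₀, hx₀⟩ := hpos
    obtain ⟨w₁, hw₁, hfw₁⟩ := hint.exists_mem_lt_of_measure_eq_top hx₀ (s := Iio x₀) (by simp)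
    obtain ⟨w₂, hw₂, hfw₂⟩ := hint.exists_mem_lt_of_measure_eq_top hx₀ (s := Ioi x₀) (by simp)
    exact hq.exists_forall_le hf (le_of_lt hw₁) (le_of_lt hw₂) hfw₁ hfw₂
  · simp only [not_exists, not_lt] at hpos
    exact ⟨0, fun x => (hpos x).trans (hnn 0)⟩

theorem QuasiconcaveOn.unimodal {f : ℝ → ℝ} (hq : QuasiconcaveOn ℝ univ f) {a : ℝ}
    (ha : ∀ x, f x ≤ f a) : Unimodal f := by
  refine ⟨a, fun x _ y hy hxy => ?_, fun x hx y _ hxy => ?_⟩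
  · simpa [min_eq_left (ha x)] using hq.min_le_of_mem_Icc ⟨hxy, hy⟩
  · simpa [min_eq_right (ha y)] using hq.min_le_of_mem_Icc ⟨hx, hxy⟩

theorem unimodal_iff_level_sets_atMost_two_general
    (p : ℝ → ℝ) (hc : Continuous p) (hnn : ∀ x, 0 ≤ p x)
    (hint : Integrable p)
    (han : ∀ x, 0 < p x → AnalyticAt ℝ p x) :
    Unimodal p ↔ ∀ c : ℝ, 0 < c → ∀ x₁ x₂ x₃ : ℝ,
      p x₁ = c → p x₂ = c → p x₃ = c → x₁ = x₂ ∨ x₁ = x₃ ∨ x₂ = x₃ := by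
  refine ⟨?_, fun hlevel => ?_⟩
  · rintro ⟨a, hmono, hanti⟩ c hc₀ x₁ x₂ x₃ h₁ h₂ h₃
    have hplateau : ∀ u v, u < v → ¬ EqOn p (fun _ => c) (Icc u v) := fun _ _ =>
      hint.not_eqOn_const_Icc hc hc₀.ne' fun x hx => han x (hx ▸ hc₀)
    have hL := hmono.subsingleton_inter_preimage_of_not_eqOn ordConnected_Iic hplateau
    have hR := hanti.subsingleton_inter_preimage_of_not_eqOn ordConnected_Ici hplateau
    have hcover : ∀ {x}, p x = c → x ∈ (Iic a ∩ p ⁻¹' {c}) ∪ (Ici a ∩ p ⁻¹' {c}) := fun hx =>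
      (le_total _ a).imp (⟨·, hx⟩) (⟨·, hx⟩)
    exact hL.eq_or_eq_or_eq_of_mem_union hR (hcover h₁) (hcover h₂) (hcover h₃)
  · have hq := quasiconcaveOn_univ_of_level_sets hc hnn hint hlevel
    obtain ⟨a, ha⟩ := hq.exists_forall_le_of_integrable hc hnn hint
    exact hq.unimodal ha

theorem unimodal_iff_level_sets_atMost_two
    (p : ℝ → ℝ) (hc : Continuous p) (hnn : ∀ x, 0 ≤ p x)
    (hint : Integrable p) (hnorm : ∫ x, p x = 1)
    (han : ∀ x, 0 < p x → AnalyticAt ℝ p x) :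
    Unimodal p ↔ ∀ c : ℝ, 0 < c → ∀ x₁ x₂ x₃ : ℝ,
      p x₁ = c → p x₂ = c → p x₃ = c → x₁ = x₂ ∨ x₁ = x₃ ∨ x₂ = x₃ :=
  unimodal_iff_level_sets_atMost_two_general p hc hnn hint han
end

section
/- For every t > 1, the function v_t : ℝ → ℝ defined by v_t(u) = √( (t - 2 - 2u² + √(t² + 16u²)) / 2 ) is unimodal if and only if t ≥ 4. (Here √ denotes the real square root with √s = 0 for s ≤ 0, so v_t(u) = 0 wherever the inner expression is nonpositive.) -/
/-!
With `w = t² + 16u²` the radicand of `v_t(u)` is `(t - 2 + t²/8 + (√w - w/8))/2`, and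
`w ↦ √w - w/8` decreases on `[16, ∞)`. If `t ≥ 4` then `w ≥ 16` everywhere, so `v_t` increases
up to `0` and decreases after it. If `1 < t < 4`, the even function `v_t` is not maximal at `0`:
at `16u² = 16 - t²` one has `v_t(u)² - v_t(0)² = (t/4 - 1)² > 0`; but an even unimodal function
is maximal at `0`.
-/

open MeasureTheory Real Set Filter Topology

theorem Unimodal.apply_le_apply_zero_of_even {f : ℝ → ℝ} (hf : Unimodal f)
    (heven : ∀ x, f (-x) = f x) (x : ℝ) : f x ≤ f 0 := by
  obtain ⟨a, hmono, hanti⟩ := hf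
  wlog hx : 0 ≤ x generalizing x
  · simpa only [heven] using this (-x) (by linarith)
  rcases le_total a 0 with ha | ha
  · exact hanti (mem_Ici.2 ha) (mem_Ici.2 (ha.trans hx)) hx
  · rw [← heven x]
    exact hmono (mem_Iic.2 (by linarith)) (mem_Iic.2 ha) (by linarith)

theorem unimodal_comp_sq_of_antitoneOn {g : ℝ → ℝ} (hg : AntitoneOn g (Ici 0)) :
    Unimodal (fun u => g (u ^ 2)) := by
  refine ⟨0, fun x hx y hy hxy => ?_, fun x hx y hy hxy => ?_⟩
  · have hy : y ≤ 0 := hy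
    exact hg (mem_Ici.2 (sq_nonneg y)) (mem_Ici.2 (sq_nonneg x)) (by nlinarith)
  · have hx : 0 ≤ x := hx
    exact hg (mem_Ici.2 (sq_nonneg x)) (mem_Ici.2 (sq_nonneg y)) (by nlinarith)

theorem antitoneOn_sqrt_sub_div_eight : AntitoneOn (fun w : ℝ => √w - w / 8) (Ici 16) := by
  intro a ha b hb hab
  have ha : (16 : ℝ) ≤ a := ha
  have hsa : 4 ≤ √a := le_sqrt_of_sq_le (by linarith)
  have hsab : √a ≤ √b := sqrt_le_sqrt hab
  -- `b - a = (√b - √a)(√b + √a)` and `√b + √a ≥ 8`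
  nlinarith [sq_sqrt (by linarith : (0 : ℝ) ≤ a), sq_sqrt (by linarith : (0 : ℝ) ≤ b),
    mul_nonneg (sub_nonneg.2 hsab) (by linarith : (0 : ℝ) ≤ √a + √b - 8)]

theorem bernoulli_semicircle_density_unimodal_iff (t : ℝ) (ht : 1 < t) :
    Unimodal (fun u : ℝ =>
      Real.sqrt ((t - 2 - 2 * u ^ 2 + Real.sqrt (t ^ 2 + 16 * u ^ 2)) / 2)) ↔ 4 ≤ t := by
  set g : ℝ → ℝ := fun s => √((t - 2 - 2 * s + √(t ^ 2 + 16 * s)) / 2) with hg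
  change Unimodal (fun u => g (u ^ 2)) ↔ 4 ≤ t
  constructor
  · intro hv
    by_contra! ht4
    -- the maximum point `w = 16` of `√w - w/8`
    set s₀ := (16 - t ^ 2) / 16
    have hs₀ : 0 ≤ s₀ := by unfold s₀; nlinarith
    have hv₀ : g 0 = √(t - 1) := by
      simp only [hg, mul_zero, add_zero, sqrt_sq (by linarith : 0 ≤ t)]
      ring_nf
    have hvs₀ : g s₀ = √((t + t ^ 2 / 8) / 2) := by
      have h16 : t ^ 2 + 16 * s₀ = 4 ^ 2 := by unfold s₀; ring
      simp only [hg, h16, sqrt_sq (by norm_num : (0 : ℝ) ≤ 4)]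
      unfold s₀; ring_nf
    have hlt : g 0 < g s₀ := by
      rw [hv₀, hvs₀]
      exact sqrt_lt_sqrt (by linarith) (by nlinarith [sq_pos_of_pos (by linarith : 0 < 4 - t)])
    have hle : g (√s₀ ^ 2) ≤ g (0 ^ 2) :=
      hv.apply_le_apply_zero_of_even (fun x => by simp only [neg_sq]) √s₀
    rw [sq_sqrt hs₀, zero_pow two_ne_zero] at hle
    exact hle.not_gt hlt
  · intro ht4
    refine unimodal_comp_sq_of_antitoneOn fun a ha b hb hab => sqrt_le_sqrt ?_
    have ha : (0 : ℝ) ≤ a := ha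
    have hφ := antitoneOn_sqrt_sub_div_eight (mem_Ici.2 (by nlinarith : 16 ≤ t ^ 2 + 16 * a))
      (mem_Ici.2 (by nlinarith : 16 ≤ t ^ 2 + 16 * b)) (by linarith : t ^ 2 + 16 * a ≤ t ^ 2 + 16 * b)
    simp only at hφ
    linarith
end

section
/- Let L > 0 and let μ be a Borel probability measure on ℝ supported in the interval [-L/2, L/2]. For R > 0 define ξ_R : ℝ → ℝ by ξ_R(u) = ∫_ℝ ((x - u)² + R²)⁻¹ dμ(x). Then for every t ≥ 4L² and every R > 0, the set {u ∈ ℝ : ξ_R(u) = 1/t} contains at most two points (i.e., for all u₁, u₂, u₃ with ξ_R(u₁) = ξ_R(u₂) = ξ_R(u₃) = 1/t, at least two of u₁, u₂, u₃ are equal). -/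
open MeasureTheory Real Set Filter Topology

/-!
For `x` in the support, `((x - u)^2 + R^2)⁻¹` increases in `u ≤ -L/2` and decreases in
`u ≥ L/2`, so `ξ_R` is strictly monotone on both sides of `[-L/2, L/2]` and the middle one `q`
of three solutions `p < q < r` lies inside that interval. If `R^2 < 3L^2`, then there
`ξ_R q ≥ (L^2 + R^2)⁻¹ > 1/t`. If `R^2 ≥ 3L^2`, the kernel `y ↦ (y^2 + R^2)⁻¹` is strictly
concave on `[-L, L]`, hence `ξ_R` is strictly concave on `[-L/2, L/2]`; by monotonicity
`ξ_R ≥ 1/t` at `max p (-L/2)` and `min r (L/2)`, and concavity then forces `ξ_R q > 1/t`.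
-/

section IntegralComparison

variable {α : Type*} [MeasurableSpace α] {μ : Measure α} {s : Set α} {f g : α → ℝ}

theorem integral_mono_of_forall_mem_le (hs : μ sᶜ = 0) (hf : Integrable f μ)
    (hg : Integrable g μ) (h : ∀ x ∈ s, f x ≤ g x) : ∫ x, f x ∂μ ≤ ∫ x, g x ∂μ :=
  integral_mono_ae hf hg <| (ae_iff.2 hs).mono h

theorem integral_lt_integral_of_forall_mem_lt [NeZero μ] (hs : μ sᶜ = 0) (hf : Integrable f μ)
    (hg : Integrable g μ) (h : ∀ x ∈ s, f x < g x) : ∫ x, f x ∂μ < ∫ x, g x ∂μ := by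
  have hs_pos : μ s ≠ 0 := by
    rw [measure_congr (ae_eq_univ.2 hs)]
    exact Measure.measure_univ_ne_zero.2 (NeZero.ne μ)
  rw [← sub_pos, ← integral_sub hg hf, integral_pos_iff_support_of_nonneg_ae
    ((ae_iff.2 hs).mono fun x hx ↦ sub_nonneg.2 (h x hx).le) (hg.sub hf)]
  exact pos_iff_ne_zero.2 fun h0 ↦ hs_pos <|
    measure_mono_null (fun x hx ↦ (sub_pos.2 (h x hx)).ne') h0

end IntegralComparison

theorem strictConcaveOn_inv_sq_add_sq {c R : ℝ} (hR : R ≠ 0) (hc : 3 * c ^ 2 ≤ R ^ 2) :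
    StrictConcaveOn ℝ (Icc (-c) c) fun y : ℝ ↦ (y ^ 2 + R ^ 2)⁻¹ := by
  have hpos (y : ℝ) : 0 < y ^ 2 + R ^ 2 := by positivity
  have hsq (y : ℝ) : HasDerivAt (fun y : ℝ ↦ y ^ 2 + R ^ 2) (2 * y) y := by
    simpa using (hasDerivAt_pow 2 y).add_const (R ^ 2)
  have hderiv : deriv (fun y : ℝ ↦ (y ^ 2 + R ^ 2)⁻¹) =
      fun y ↦ -(2 * y) / (y ^ 2 + R ^ 2) ^ 2 :=
    funext fun y ↦ ((hsq y).inv (hpos y).ne').deriv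
  have hderiv2 (y : ℝ) : HasDerivAt (fun y ↦ -(2 * y) / (y ^ 2 + R ^ 2) ^ 2)
      ((6 * y ^ 2 - 2 * R ^ 2) / (y ^ 2 + R ^ 2) ^ 3) y := by
    refine (((hasDerivAt_id' y).const_mul 2).fun_neg.fun_div ((hsq y).fun_pow 2)
      (pow_ne_zero 2 (hpos y).ne')).congr_deriv ?_
    field_simp
    ring
  refine strictConcaveOn_of_deriv2_neg (convex_Icc _ _)
    (continuousOn_of_forall_continuousAt fun y _ ↦ ((hsq y).inv (hpos y).ne').continuousAt)
    fun y hy ↦ ?_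
  rw [interior_Icc] at hy
  rw [Function.iterate_succ_apply, Function.iterate_one, hderiv, (hderiv2 y).deriv]
  have hy2 : 3 * y ^ 2 < R ^ 2 := by nlinarith [hy.1, hy.2]
  exact div_neg_of_neg_of_pos (by linarith) (pow_pos (hpos y) 3)

theorem eq_or_eq_or_eq_of_forall_lt_lt {α : Type*} [LinearOrder α] {P : α → Prop}
    (h : ∀ ⦃p q r⦄, p < q → q < r → P p → P q → P r → False) {u₁ u₂ u₃ : α}
    (h₁ : P u₁) (h₂ : P u₂) (h₃ : P u₃) : u₁ = u₂ ∨ u₁ = u₃ ∨ u₂ = u₃ := by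
  grind [lt_trichotomy]

section LevelSets

variable {f : ℝ → ℝ} {a b p q r : ℝ}

theorem mem_Ioo_of_eq_of_strictMonoOn_of_strictAntiOn (hmono : StrictMonoOn f (Iic a))
    (hanti : StrictAntiOn f (Ici b)) (hpq : p < q) (hqr : q < r) (hp : f p = f q)
    (hr : f r = f q) : q ∈ Ioo a b := by
  refine ⟨lt_of_not_ge fun hqa ↦ ?_, lt_of_not_ge fun hbq ↦ ?_⟩
  · exact (hmono (hpq.le.trans hqa) hqa hpq).ne hp
  · exact (hanti hbq (hbq.trans hqr.le) hqr).ne hr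

theorem StrictConcaveOn.false_of_eq_of_strictMonoOn_of_strictAntiOn
    (hconc : StrictConcaveOn ℝ (Icc a b) f) (hmono : StrictMonoOn f (Iic a))
    (hanti : StrictAntiOn f (Ici b)) (hpq : p < q) (hqr : q < r) (hp : f p = f q)
    (hr : f r = f q) : False := by
  obtain ⟨haq, hqb⟩ := mem_Ioo_of_eq_of_strictMonoOn_of_strictAntiOn hmono hanti hpq hqr hp hr
  have hp' : f q ≤ f (max p a) := by
    rcases le_total p a with hpa | hap
    · rw [max_eq_right hpa, ← hp]
      exact hmono.monotoneOn hpa self_mem_Iic hpa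
    · rw [max_eq_left hap, hp]
  have hr' : f q ≤ f (min r b) := by
    rcases le_total r b with hrb | hbr
    · rw [min_eq_left hrb, hr]
    · rw [min_eq_right hbr, ← hr]
      exact hanti.antitoneOn self_mem_Ici hbr hbr
  have hp'q : max p a < q := max_lt hpq haq
  have hqr' : q < min r b := lt_min hqr hqb
  have hp'r' := hp'q.trans hqr'
  have hmin := hconc.lt_on_openSegment ⟨le_max_right p a, hp'r'.le.trans (min_le_right r b)⟩
    ⟨(le_max_right p a).trans hp'r'.le, min_le_right r b⟩ hp'r'.ne
    (Ioo_subset_openSegment ⟨hp'q, hqr'⟩)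
  exact (le_min hp' hr').not_gt hmin

end LevelSets

/-- The paper's `ξ_R(u)`, which is `-(1/R) Im G_μ(u + iR)` for the Cauchy transform `G_μ`. -/
noncomputable def cauchyKernelIntegral (μ : Measure ℝ) (R u : ℝ) : ℝ :=
  ∫ x, ((x - u) ^ 2 + R ^ 2)⁻¹ ∂μ

section CauchyKernelIntegral

variable {μ : Measure ℝ} {R a b : ℝ}

theorem integrable_inv_sub_sq_add_sq [IsFiniteMeasure μ] (hR : R ≠ 0) (u : ℝ) :
    Integrable (fun x ↦ ((x - u) ^ 2 + R ^ 2)⁻¹) μ := by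
  refine Integrable.of_bound (by fun_prop : Measurable _).aestronglyMeasurable (R ^ 2)⁻¹
    (ae_of_all _ fun x ↦ ?_)
  rw [Real.norm_of_nonneg (by positivity)]
  exact inv_anti₀ (by positivity) (le_add_of_nonneg_left (sq_nonneg _))

theorem strictMonoOn_cauchyKernelIntegral [IsFiniteMeasure μ] [NeZero μ] (hR : R ≠ 0)
    (hμ : μ (Ici a)ᶜ = 0) : StrictMonoOn (cauchyKernelIntegral μ R) (Iic a) := by
  intro u _ v hv huv
  refine integral_lt_integral_of_forall_mem_lt hμ (integrable_inv_sub_sq_add_sq hR u)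
    (integrable_inv_sub_sq_add_sq hR v) fun x hx ↦ ?_
  have hvx : v ≤ x := le_trans hv hx
  exact inv_strictAnti₀ (by positivity) (by nlinarith)

theorem strictAntiOn_cauchyKernelIntegral [IsFiniteMeasure μ] [NeZero μ] (hR : R ≠ 0)
    (hμ : μ (Iic b)ᶜ = 0) : StrictAntiOn (cauchyKernelIntegral μ R) (Ici b) := by
  intro u hu v _ huv
  refine integral_lt_integral_of_forall_mem_lt hμ (integrable_inv_sub_sq_add_sq hR v)
    (integrable_inv_sub_sq_add_sq hR u) fun x hx ↦ ?_
  have hxu : x ≤ u := le_trans hx hu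
  exact inv_strictAnti₀ (by positivity) (by nlinarith)

theorem strictConcaveOn_cauchyKernelIntegral [IsFiniteMeasure μ] [NeZero μ] (hR : R ≠ 0)
    (hμ : μ (Icc a b)ᶜ = 0) (hab : 3 * (b - a) ^ 2 ≤ R ^ 2) :
    StrictConcaveOn ℝ (Icc a b) (cauchyKernelIntegral μ R) := by
  have hk := strictConcaveOn_inv_sq_add_sq hR hab
  have hsub {x w : ℝ} (hx : x ∈ Icc a b) (hw : w ∈ Icc a b) :
      x - w ∈ Icc (-(b - a)) (b - a) :=
    ⟨by linarith [hx.1, hw.2], by linarith [hx.2, hw.1]⟩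
  refine ⟨convex_Icc a b, fun u hu v hv huv s t hs ht hst ↦ ?_⟩
  have hu_int := (integrable_inv_sub_sq_add_sq (μ := μ) hR u).const_mul s
  have hv_int := (integrable_inv_sub_sq_add_sq (μ := μ) hR v).const_mul t
  simp only [cauchyKernelIntegral, smul_eq_mul, ← integral_const_mul]
  rw [← integral_add hu_int hv_int]
  refine integral_lt_integral_of_forall_mem_lt hμ (hu_int.add hv_int)
    (integrable_inv_sub_sq_add_sq hR _) fun x hx ↦ ?_
  have hxuv := hk.2 (hsub hx hu) (hsub hx hv) (sub_right_injective.ne huv) hs ht hst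
  simp only [smul_eq_mul] at hxuv
  rwa [show s * (x - u) + t * (x - v) = x - (s * u + t * v) by linear_combination x * hst]
    at hxuv

theorem inv_sq_add_sq_le_cauchyKernelIntegral [IsProbabilityMeasure μ] (hR : R ≠ 0)
    (hμ : μ (Icc a b)ᶜ = 0) {u : ℝ} (hu : u ∈ Icc a b) :
    ((b - a) ^ 2 + R ^ 2)⁻¹ ≤ cauchyKernelIntegral μ R u := by
  calc ((b - a) ^ 2 + R ^ 2)⁻¹ = ∫ _, ((b - a) ^ 2 + R ^ 2)⁻¹ ∂μ := by simp
    _ ≤ cauchyKernelIntegral μ R u :=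
      integral_mono_of_forall_mem_le hμ (integrable_const _) (integrable_inv_sub_sq_add_sq hR u)
        fun x hx ↦ by
          have hdist : (x - u) ^ 2 ≤ (b - a) ^ 2 :=
            sq_le_sq' (by linarith [hx.1, hu.2]) (by linarith [hx.2, hu.1])
          exact inv_anti₀ (by positivity) (by linarith)

end CauchyKernelIntegral

theorem cauchy_level_equation_atMost_two_solutions_general
    (L : ℝ) (μ : Measure ℝ) [IsProbabilityMeasure μ]
    (hsupp : μ (Set.Icc (-(L / 2)) (L / 2))ᶜ = 0)
    (t : ℝ) (ht : 4 * L ^ 2 ≤ t) (R : ℝ) (hR : 0 < R)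
    (u₁ u₂ u₃ : ℝ)
    (h₁ : ∫ x, ((x - u₁) ^ 2 + R ^ 2)⁻¹ ∂μ = 1 / t)
    (h₂ : ∫ x, ((x - u₂) ^ 2 + R ^ 2)⁻¹ ∂μ = 1 / t)
    (h₃ : ∫ x, ((x - u₃) ^ 2 + R ^ 2)⁻¹ ∂μ = 1 / t) :
    u₁ = u₂ ∨ u₁ = u₃ ∨ u₂ = u₃ := by
  have hwidth : L / 2 - -(L / 2) = L := by ring
  have hmono := strictMonoOn_cauchyKernelIntegral hR.ne'
    (measure_mono_null (compl_subset_compl.2 Icc_subset_Ici_self) hsupp)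
  have hanti := strictAntiOn_cauchyKernelIntegral hR.ne'
    (measure_mono_null (compl_subset_compl.2 Icc_subset_Iic_self) hsupp)
  refine eq_or_eq_or_eq_of_forall_lt_lt (P := fun u ↦ cauchyKernelIntegral μ R u = 1 / t)
    (fun p q r hpq hqr hp hq hr ↦ ?_) h₁ h₂ h₃
  have hpq_eq := hp.trans hq.symm
  have hrq_eq := hr.trans hq.symm
  rcases le_or_gt (3 * L ^ 2) (R ^ 2) with hLR | hLR
  · have hconc := strictConcaveOn_cauchyKernelIntegral hR.ne' hsupp (by rwa [hwidth])
    exact hconc.false_of_eq_of_strictMonoOn_of_strictAntiOn hmono hanti hpq hqr hpq_eq hrq_eq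
  · have hq_mem :=
      mem_Ioo_of_eq_of_strictMonoOn_of_strictAntiOn hmono hanti hpq hqr hpq_eq hrq_eq
    have hbound :=
      inv_sq_add_sq_le_cauchyKernelIntegral hR.ne' hsupp (Ioo_subset_Icc_self hq_mem)
    rw [hwidth, hq, one_div] at hbound
    exact hbound.not_gt (inv_strictAnti₀ (by positivity) (by linarith))

theorem cauchy_level_equation_atMost_two_solutions
    (L : ℝ) (hL : 0 < L) (μ : Measure ℝ) [IsProbabilityMeasure μ]
    (hsupp : μ (Set.Icc (-(L / 2)) (L / 2))ᶜ = 0)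
    (t : ℝ) (ht : 4 * L ^ 2 ≤ t) (R : ℝ) (hR : 0 < R)
    (u₁ u₂ u₃ : ℝ)
    (h₁ : ∫ x, ((x - u₁) ^ 2 + R ^ 2)⁻¹ ∂μ = 1 / t)
    (h₂ : ∫ x, ((x - u₂) ^ 2 + R ^ 2)⁻¹ ∂μ = 1 / t)
    (h₃ : ∫ x, ((x - u₃) ^ 2 + R ^ 2)⁻¹ ∂μ = 1 / t) :
    u₁ = u₂ ∨ u₁ = u₃ ∨ u₂ = u₃ :=
  cauchy_level_equation_atMost_two_solutions_general L μ hsupp t ht R hR u₁ u₂ u₃ h₁ h₂ h₃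
end
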